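/- With f_k the binary logistic loss for the worst-case dataset (A_k, b_k) and K_{t,k} = span{e_{k-t+1},...,e_k}: for all x ∈ K_{t,k} with t ≤ k, ∇f_k(x) ∈ K_{t+1,k} (where K_{k+1,k} := ℝ^k). -/

import Mathlib

noncomputable section

/-- The k×k matrix `W_k` with 1's on the main anti-diagonal (1-based entries `i+j = k+1`)
and -1's on the adjacent anti-diagonal (`i+j = k`). -/
def Wmat (k : ℕ) : Matrix (Fin k) (Fin k) ℝ :=
  Matrix.of fun i j =>
    if (i : ℕ) + (j : ℕ) + 2 = k + 1 then 1
    else if (i : ℕ) + (j : ℕ) + 2 = k then -1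
    else 0

/-- The 4k×k data matrix with vertical blocks `2σW_k, -2ζW_k, -2σW_k, 2ζW_k`. -/
def Amat (σ ζ : ℝ) (k : ℕ) : Matrix (Fin (4 * k)) (Fin k) ℝ :=
  Matrix.of fun i j =>
    if h1 : (i : ℕ) < k then 2 * σ * Wmat k ⟨i, h1⟩ j
    else if h2 : (i : ℕ) < 2 * k then -2 * ζ * Wmat k ⟨(i : ℕ) - k, by omega⟩ j
    else if h3 : (i : ℕ) < 3 * k then -2 * σ * Wmat k ⟨(i : ℕ) - 2 * k, by omega⟩ j
    else 2 * ζ * Wmat k ⟨(i : ℕ) - 3 * k, by have := i.isLt; omega⟩ j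

/-- The response vector `b_k = (𝟙_k, 𝟙_k, -𝟙_k, -𝟙_k)`. -/
def bvec (k : ℕ) : Fin (4 * k) → ℝ := fun i => if (i : ℕ) < 2 * k then 1 else -1

/-- The binary logistic regression loss `f_k(x) = h(A_k x) - b_kᵀ A_k x` with
`h(u) = Σᵢ 2 log(2 cosh(uᵢ/2))`. -/
def fk (σ ζ : ℝ) (k : ℕ) (x : Fin k → ℝ) : ℝ :=
  (∑ i, 2 * Real.log (2 * Real.cosh ((Amat σ ζ k).mulVec x i / 2)))
    - ∑ i, bvec k i * (Amat σ ζ k).mulVec x i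

/-- `x* = c·(1, 2, …, k)ᵀ`. -/
def xstar (c : ℝ) (k : ℕ) : Fin k → ℝ := fun i => c * ((i : ℕ) + 1)

/-- `K_{t,k} = span{e_{k-t+1}, …, e_k}` (1-based indexing). -/
def Kspan (k t : ℕ) : Submodule ℝ (Fin k → ℝ) :=
  Submodule.span ℝ ((fun i : Fin k => Pi.single i (1 : ℝ)) '' {i : Fin k | k - t ≤ (i : ℕ)})

end
/-- `K_{t,k}` as a subspace of Euclidean space. -/
noncomputable def KspanE (k t : ℕ) : Submodule ℝ (EuclideanSpace ℝ (Fin k)) :=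
  Submodule.span ℝ
    ((fun i : Fin k => EuclideanSpace.single i (1 : ℝ)) '' {i : Fin k | k - t ≤ (i : ℕ)})

/-!
With 0-based indices, `K_{t,k}` consists of the vectors vanishing below index `k - t`, and `A_k`
stacks the four scaled copies `c_q W_k`. Hence `∇f_k(x) = A_kᵀ (tanh(A_k x / 2) - b_k)` equals
`Σ_q c_q W_kᵀ d_q` with `d_q(r) = tanh(c_q (W_k x)_r / 2) - β_q`. For `x ∈ K_{t,k}` the entry
`(W_k x)_r = x_{k-1-r} - x_{k-2-r}` vanishes when `r ≥ t`, so each `d_q` is constant on the rows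
`r ≥ t`; and `(W_kᵀ d)_j = d_{k-1-j} - d_{k-2-j}` only sees such rows when `j < k - (t + 1)`.
-/

open Matrix InnerProductSpace

theorem hasGradientAt_sum_comp_mulVec {m n : Type*} [Fintype m] [Fintype n] (A : Matrix m n ℝ)
    (φ φ' : m → ℝ → ℝ) (x : EuclideanSpace ℝ n)
    (hφ : ∀ i, HasDerivAt (φ i) (φ' i ((A *ᵥ x) i)) ((A *ᵥ x) i)) :
    HasGradientAt (fun y : EuclideanSpace ℝ n => ∑ i, φ i ((A *ᵥ y) i))
      (WithLp.toLp 2 ((fun i => φ' i ((A *ᵥ x) i)) ᵥ* A)) x := by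
  have hrow : ∀ i, HasFDerivAt (fun y : EuclideanSpace ℝ n => (A *ᵥ y) i)
      (toDual ℝ _ (WithLp.toLp 2 (A i))) x := by
    intro i
    convert (toDual ℝ (EuclideanSpace ℝ n) (WithLp.toLp 2 (A i))).hasFDerivAt with y
    simp [EuclideanSpace.inner_eq_star_dotProduct, mulVec, dotProduct_comm]
  rw [hasGradientAt_iff_hasFDerivAt, vecMul_eq_sum, WithLp.toLp_sum, map_sum]
  refine HasFDerivAt.fun_sum fun i _ => ?_
  rw [WithLp.toLp_smul, map_smul]
  exact (hφ i).comp_hasFDerivAt x (hrow i)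

lemma mem_KspanE_iff {k t : ℕ} {x : EuclideanSpace ℝ (Fin k)} :
    x ∈ KspanE k t ↔ ∀ j : Fin k, (j : ℕ) < k - t → x j = 0 := by
  have hsingle : (fun i : Fin k => EuclideanSpace.single i (1 : ℝ)) =
      (EuclideanSpace.basisFun (Fin k) ℝ).toBasis := by
    funext i; simp
  rw [KspanE, hsingle, Module.Basis.mem_span_image]
  simp only [Set.subset_def, Finset.mem_coe, Finsupp.mem_support_iff, Set.mem_ofPred_eq,
    OrthonormalBasis.coe_toBasis_repr_apply, EuclideanSpace.basisFun_repr]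
  refine forall_congr' fun j => ?_
  rw [not_imp_comm, not_le]

noncomputable def logisticLoss (b u : ℝ) : ℝ := 2 * Real.log (2 * Real.cosh (u / 2)) - b * u

lemma hasDerivAt_logisticLoss (b u : ℝ) :
    HasDerivAt (logisticLoss b) (Real.tanh (u / 2) - b) u := by
  have hcosh := (((hasDerivAt_id u).div_const 2).cosh.const_mul 2).log
    (by positivity : 2 * Real.cosh (u / 2) ≠ 0)
  refine ((hcosh.const_mul 2).sub ((hasDerivAt_id u).const_mul b)).congr_deriv ?_
  simp only [id, Real.tanh_eq_sinh_div_cosh]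
  field_simp

lemma fk_eq_sum_logisticLoss (σ ζ : ℝ) (k : ℕ) (x : Fin k → ℝ) :
    fk σ ζ k x = ∑ i, logisticLoss (bvec k i) ((Amat σ ζ k *ᵥ x) i) := by
  simp only [fk, logisticLoss, Finset.sum_sub_distrib]

lemma hasGradientAt_fk (σ ζ : ℝ) (k : ℕ) (x : EuclideanSpace ℝ (Fin k)) :
    HasGradientAt (fun y : EuclideanSpace ℝ (Fin k) => fk σ ζ k y)
      (WithLp.toLp 2 ((fun i => Real.tanh ((Amat σ ζ k *ᵥ x) i / 2) - bvec k i) ᵥ* Amat σ ζ k))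
      x := by
  simp only [fk_eq_sum_logisticLoss]
  exact hasGradientAt_sum_comp_mulVec (Amat σ ζ k) (fun i => logisticLoss (bvec k i))
    (fun i u => Real.tanh (u / 2) - bvec k i) x fun i => hasDerivAt_logisticLoss _ _

lemma Wmat_mulVec_apply_eq_zero {k t : ℕ} {x : Fin k → ℝ}
    (hx : ∀ i : Fin k, (i : ℕ) < k - t → x i = 0) {r : Fin k} (hr : t ≤ (r : ℕ)) :
    (Wmat k *ᵥ x) r = 0 := by
  simp only [mulVec, dotProduct]
  refine Finset.sum_eq_zero fun i _ => ?_
  have hrk := r.2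
  simp only [Wmat, of_apply]
  split_ifs <;> first | exact zero_mul _ | rw [hx i (by omega), mul_zero]

lemma vecMul_Wmat_apply (k : ℕ) (v : Fin k → ℝ) (j : Fin k) (hj : (j : ℕ) + 2 ≤ k) :
    (v ᵥ* Wmat k) j = v ⟨k - 1 - j, by omega⟩ - v ⟨k - 2 - j, by omega⟩ := by
  have hterm : ∀ r : Fin k, v r * Wmat k r j =
      (if r = ⟨k - 1 - j, by omega⟩ then v r else 0) +
        (if r = ⟨k - 2 - j, by omega⟩ then -v r else 0) := by
    intro r
    simp only [Wmat, of_apply, Fin.ext_iff]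
    split_ifs <;> first | ring1 | (exfalso; omega)
  simp [vecMul, dotProduct, hterm, Finset.sum_add_distrib, sub_eq_add_neg]

lemma vecMul_Wmat_apply_eq_zero {k t : ℕ} {v : Fin k → ℝ} {a : ℝ}
    (hv : ∀ r : Fin k, t ≤ (r : ℕ) → v r = a) {j : Fin k} (hj : (j : ℕ) < k - (t + 1)) :
    (v ᵥ* Wmat k) j = 0 := by
  rw [vecMul_Wmat_apply k v j (by omega), hv _ (by simp only; omega), hv _ (by simp only; omega),
    sub_self]

def blockScale (σ ζ : ℝ) : Fin 4 → ℝ := ![2 * σ, -2 * ζ, -2 * σ, 2 * ζ]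

-- Row `finProdFinEquiv (q, r) = r + k * q` of `Amat` is row `r` of its block `q`.
lemma Amat_finProdFinEquiv (σ ζ : ℝ) (k : ℕ) (q : Fin 4) (r j : Fin k) :
    Amat σ ζ k (finProdFinEquiv (q, r)) j = blockScale σ ζ q * Wmat k r j := by
  have hrk := r.2
  fin_cases q <;>
    simp only [Amat, of_apply, blockScale, finProdFinEquiv_apply_val] <;>
    split_ifs <;> first | (exfalso; omega) |
      exact congrArg₂ _ rfl (congrArg₂ _ (Fin.ext (by simp only; omega)) rfl)

lemma bvec_finProdFinEquiv (k : ℕ) (q : Fin 4) (r : Fin k) :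
    bvec k (finProdFinEquiv (q, r)) = ![1, 1, -1, -1] q := by
  have hrk := r.2
  fin_cases q <;> simp [bvec, finProdFinEquiv_apply_val] <;> omega

lemma Amat_mulVec_finProdFinEquiv (σ ζ : ℝ) (k : ℕ) (x : Fin k → ℝ) (q : Fin 4) (r : Fin k) :
    (Amat σ ζ k *ᵥ x) (finProdFinEquiv (q, r)) = blockScale σ ζ q * (Wmat k *ᵥ x) r := by
  simp only [mulVec, dotProduct, Amat_finProdFinEquiv, Finset.mul_sum, mul_assoc]

lemma vecMul_Amat (σ ζ : ℝ) (k : ℕ) (d : Fin (4 * k) → ℝ) :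
    d ᵥ* Amat σ ζ k =
      ∑ q, blockScale σ ζ q • ((fun r => d (finProdFinEquiv (q, r))) ᵥ* Wmat k) := by
  ext j
  simp only [vecMul, dotProduct, Finset.sum_apply, Pi.smul_apply, smul_eq_mul, Finset.mul_sum]
  rw [← finProdFinEquiv.sum_comp, Fintype.sum_prod_type]
  simp only [Amat_finProdFinEquiv]
  exact Finset.sum_congr rfl fun q _ => Finset.sum_congr rfl fun r _ => by ring

theorem gradient_fk_mem_Kspan_succ_general (σ ζ : ℝ) (k t : ℕ)
    (x : EuclideanSpace ℝ (Fin k)) (hx : x ∈ KspanE k t) :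
    gradient (fun y : EuclideanSpace ℝ (Fin k) => fk σ ζ k y) x ∈ KspanE k (t + 1) := by
  rw [(hasGradientAt_fk σ ζ k x).gradient, mem_KspanE_iff]
  intro j hj
  rw [WithLp.ofLp_toLp, vecMul_Amat, Finset.sum_apply]
  refine Finset.sum_eq_zero fun q _ => ?_
  rw [Pi.smul_apply, vecMul_Wmat_apply_eq_zero (a := Real.tanh 0 - ![1, 1, -1, -1] q) _ hj,
    smul_zero]
  intro r hr
  rw [Amat_mulVec_finProdFinEquiv, bvec_finProdFinEquiv,
    Wmat_mulVec_apply_eq_zero (mem_KspanE_iff.mp hx) hr, mul_zero, zero_div]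

theorem gradient_fk_mem_Kspan_succ (σ ζ : ℝ) (hζ : 0 < ζ) (hζσ : ζ < σ) (k t : ℕ)
    (htk : t ≤ k) (x : EuclideanSpace ℝ (Fin k)) (hx : x ∈ KspanE k t) :
    gradient (fun y : EuclideanSpace ℝ (Fin k) => fk σ ζ k y) x ∈ KspanE k (t + 1) :=
  gradient_fk_mem_Kspan_succ_general σ ζ k t x hx
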